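/- arXiv:1705.05927 — 3 statements merged into one kernel-verified Lean document; each statement's English description precedes it below -/
import Mathlib

section
/- Let f : ℝⁿ → ℝⁿ be continuously differentiable, and let x₀, y₀ ∈ ℝⁿ. Then there exists ω ∈ [0,1] such that, setting ξ = ω·x₀ + (1−ω)·y₀ and letting Df(ξ) denote the Jacobian matrix of f at ξ, one has ‖f(x₀) − f(y₀)‖₂ ≤ sqrt(λ_max(Df(ξ)ᵀ · Df(ξ))) · ‖x₀ − y₀‖₂, where ‖·‖₂ is the Euclidean norm. -/
/-! With `v = f x₀ - f y₀`, the mean value theorem for the real function `z ↦ v ⬝ᵥ f z` on the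
segment gives a point `ξ` with `‖v‖² = v ⬝ᵥ J w`, where `J = Df(ξ)` and `w = x₀ - y₀`, so
`‖v‖ ≤ ‖J w‖` by Cauchy–Schwarz. Finally `‖J w‖² = w ⬝ᵥ (Jᵀ J) w ≤ λ_max(Jᵀ J) ‖w‖²`, because
`Jᵀ J ≤ λ_max(Jᵀ J) • 1` in the Loewner order. -/

open Matrix

/-- Largest eigenvalue of a real matrix, as the supremum of its real spectrum. -/
noncomputable def lambdaMax {n : ℕ} (S : Matrix (Fin n) (Fin n) ℝ) : ℝ :=
  sSup (spectrum ℝ S)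

/-- Weighted `M`-norm of a vector: `‖y‖_M = sqrt (yᵀ M y)`. -/
noncomputable def Mnorm {n : ℕ} (M : Matrix (Fin n) (Fin n) ℝ) (y : Fin n → ℝ) : ℝ :=
  Real.sqrt (y ⬝ᵥ (M *ᵥ y))

/-- Closed ball of radius `δ` about `x` in the `M`-norm. -/
def Mball {n : ℕ} (M : Matrix (Fin n) (Fin n) ℝ) (x : Fin n → ℝ) (δ : ℝ) :
    Set (Fin n → ℝ) :=
  {y | Mnorm M (y - x) ≤ δ}

/-- Jacobian matrix of `f : ℝⁿ → ℝⁿ` at `x`. -/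
noncomputable def jacobian {n : ℕ} (f : (Fin n → ℝ) → (Fin n → ℝ)) (x : Fin n → ℝ) :
    Matrix (Fin n) (Fin n) ℝ :=
  LinearMap.toMatrix' (fderiv ℝ f x).toLinearMap

theorem exists_mem_segment_apply_sub_eq_apply_fderiv {E F : Type*} [NormedAddCommGroup E]
    [NormedSpace ℝ E] [NormedAddCommGroup F] [NormedSpace ℝ F] {f : E → F}
    (hf : Differentiable ℝ f) (L : F →L[ℝ] ℝ) (x y : E) :
    ∃ z ∈ segment ℝ x y, L (f x - f y) = L (fderiv ℝ f z (x - y)) := by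
  obtain ⟨z, hz, h⟩ := domain_mvt (f := L ∘ f) (fun z _ => (L.hasFDerivAt.comp z
    (hf z).hasFDerivAt).hasFDerivWithinAt) convex_univ (Set.mem_univ y) (Set.mem_univ x)
  exact ⟨z, segment_symm ℝ y x ▸ hz, by simpa using h⟩

lemma dotProduct_self_nonneg {ι : Type*} [Fintype ι] (v : ι → ℝ) : 0 ≤ v ⬝ᵥ v :=
  Finset.sum_nonneg fun i _ => mul_self_nonneg (v i)

lemma dotProduct_le_sqrt_mul_sqrt {ι : Type*} [Fintype ι] (v u : ι → ℝ) :
    v ⬝ᵥ u ≤ √(v ⬝ᵥ v) * √(u ⬝ᵥ u) := by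
  simpa only [dotProduct, sq] using Real.sum_mul_le_sqrt_mul_sqrt Finset.univ v u

lemma sqrt_dotProduct_self_le_of_le_dotProduct {ι : Type*} [Fintype ι] {v u : ι → ℝ}
    (h : v ⬝ᵥ v ≤ v ⬝ᵥ u) : √(v ⬝ᵥ v) ≤ √(u ⬝ᵥ u) := by
  rcases (Real.sqrt_nonneg (v ⬝ᵥ v)).eq_or_lt with hv | hv
  · exact hv ▸ Real.sqrt_nonneg _
  · refine le_of_mul_le_mul_left ?_ hv
    rw [Real.mul_self_sqrt (dotProduct_self_nonneg v)]
    exact h.trans (dotProduct_le_sqrt_mul_sqrt v u)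

open scoped MatrixOrder in
lemma Matrix.IsHermitian.dotProduct_mulVec_le_lambdaMax_mul {n : ℕ}
    {S : Matrix (Fin n) (Fin n) ℝ} (hS : S.IsHermitian) (w : Fin n → ℝ) :
    w ⬝ᵥ (S *ᵥ w) ≤ lambdaMax S * (w ⬝ᵥ w) := by
  have hle : S ≤ algebraMap ℝ _ (lambdaMax S) :=
    le_algebraMap_of_spectrum_le (fun x hx => le_csSup S.finite_spectrum.bddAbove hx) hS
  simpa only [star_trivial, Algebra.algebraMap_eq_smul_one, sub_mulVec, smul_mulVec, one_mulVec,
    dotProduct_sub, dotProduct_smul, smul_eq_mul, sub_nonneg]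
    using (Matrix.le_iff.mp hle).dotProduct_mulVec_nonneg w

lemma Matrix.sqrt_dotProduct_mulVec_self_le {n : ℕ} (A : Matrix (Fin n) (Fin n) ℝ)
    (w : Fin n → ℝ) :
    √((A *ᵥ w) ⬝ᵥ (A *ᵥ w)) ≤ √(lambdaMax (Aᵀ * A)) * √(w ⬝ᵥ w) := by
  rw [← Real.sqrt_mul' _ (dotProduct_self_nonneg w)]
  refine Real.sqrt_le_sqrt ?_
  have hAA : w ⬝ᵥ ((Aᵀ * A) *ᵥ w) = (A *ᵥ w) ⬝ᵥ (A *ᵥ w) := by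
    rw [← mulVec_mulVec, dotProduct_mulVec, vecMul_transpose]
  rw [← hAA]
  have hS : (Aᵀ * A).IsHermitian := isHermitian_iff_isSymm.mpr (isSymm_transpose_mul_self A)
  exact hS.dotProduct_mulVec_le_lambdaMax_mul w

lemma jacobian_mulVec {n : ℕ} (f : (Fin n → ℝ) → (Fin n → ℝ)) (x w : Fin n → ℝ) :
    jacobian f x *ᵥ w = fderiv ℝ f x w := by
  rw [jacobian, ← Matrix.toLin'_apply, Matrix.toLin'_toMatrix']
  rfl

/-- discrepancy bound in the Euclidean norm via the
Cauchy–Green stretching factor at some point of the segment. -/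
theorem discrepancy_euclidean {n : ℕ} (f : (Fin n → ℝ) → (Fin n → ℝ))
    (hf : ContDiff ℝ 1 f) (x₀ y₀ : Fin n → ℝ) :
    ∃ ω ∈ Set.Icc (0 : ℝ) 1,
      Real.sqrt ((f x₀ - f y₀) ⬝ᵥ (f x₀ - f y₀)) ≤
        Real.sqrt (lambdaMax
            ((jacobian f (ω • x₀ + (1 - ω) • y₀))ᵀ *
              jacobian f (ω • x₀ + (1 - ω) • y₀))) *
          Real.sqrt ((x₀ - y₀) ⬝ᵥ (x₀ - y₀)) := by
  set v := f x₀ - f y₀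
  obtain ⟨_, ⟨ω, _, hω, hω', hsum, rfl⟩, hmvt⟩ := exists_mem_segment_apply_sub_eq_apply_fderiv
    (hf.differentiable one_ne_zero) (dotProductBilin ℝ ℝ v).toContinuousLinearMap x₀ y₀
  obtain rfl := eq_sub_of_add_eq' hsum
  refine ⟨ω, ⟨hω, sub_nonneg.mp hω'⟩, ?_⟩
  set J := jacobian f (ω • x₀ + (1 - ω) • y₀)
  have hv : v ⬝ᵥ v = v ⬝ᵥ (J *ᵥ (x₀ - y₀)) := by
    rw [jacobian_mulVec]
    exact hmvt
  exact (sqrt_dotProduct_self_le_of_le_dotProduct hv.le).trans (J.sqrt_dotProduct_mulVec_self_le _)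
end

section
/- Let D be a real 2×2 matrix with complex-conjugate eigenvalues α ± iβ (β ≠ 0), so that det D = α² + β². Then for every invertible real 2×2 matrix C̃, setting M̃ = C̃ᵀC̃, one has λ_max((C̃ᵀ)⁻¹·Dᵀ·M̃·D·C̃⁻¹) ≥ α² + β². In other words, the stretching factor α² + β² achieved by the eigenbasis norm (Case I of the optimal-norm computation) is minimal among all weighted norms given by symmetric positive-definite matrices. -/
open Matrix

/-!
Writing `B = C̃ D C̃⁻¹`, the deformation tensor is `BᵀB` and `det B = det D = α² + β²`.
For a `2 × 2` matrix, `λ_max(BᵀB) ≥ tr(BᵀB) / 2 ≥ |det B|`: the first inequality because the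
larger eigenvalue is at least the mean of the two, the second because `tr(BᵀB) ∓ 2 det B` is a
sum of two squares.
-/

namespace Matrix

theorem mem_spectrum_iff_fin_two {K : Type*} [Field K] (S : Matrix (Fin 2) (Fin 2) K) (x : K) :
    x ∈ spectrum K S ↔ x ^ 2 - S.trace * x + S.det = 0 := by
  have hdet : (algebraMap K _ x - S).det = x ^ 2 - S.trace * x + S.det := by
    simp only [det_fin_two, trace_fin_two, sub_apply, algebraMap_matrix_apply,
      Algebra.algebraMap_self, RingHom.id_apply, ↓reduceIte, zero_ne_one, one_ne_zero]
    ring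
  rw [spectrum.mem_iff, isUnit_iff_isUnit_det, isUnit_iff_ne_zero, not_not, hdet]

/-- The witness is the larger root `(t + √(t² - 4d)) / 2` of the characteristic polynomial. -/
theorem half_trace_le_lambdaMax_fin_two (S : Matrix (Fin 2) (Fin 2) ℝ)
    (hdisc : 4 * S.det ≤ S.trace ^ 2) : S.trace / 2 ≤ lambdaMax S := by
  set r := Real.sqrt (S.trace ^ 2 - 4 * S.det)
  have hr : r ^ 2 = S.trace ^ 2 - 4 * S.det := Real.sq_sqrt (by linarith)
  have hmem : (S.trace + r) / 2 ∈ spectrum ℝ S := by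
    rw [mem_spectrum_iff_fin_two]
    linear_combination hr / 4
  calc S.trace / 2 ≤ (S.trace + r) / 2 := by linarith [Real.sqrt_nonneg (S.trace ^ 2 - 4 * S.det)]
    _ ≤ lambdaMax S := le_csSup S.finite_spectrum.bddAbove hmem

theorem two_mul_abs_det_le_trace_transpose_mul_self (B : Matrix (Fin 2) (Fin 2) ℝ) :
    2 * |B.det| ≤ (Bᵀ * B).trace := by
  have htrace : (Bᵀ * B).trace = B 0 0 ^ 2 + B 0 1 ^ 2 + B 1 0 ^ 2 + B 1 1 ^ 2 := by
    simp only [trace_fin_two, mul_apply, Fin.sum_univ_two, transpose_apply]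
    ring
  have hbound : |B.det| ≤ (Bᵀ * B).trace / 2 := by
    rw [htrace, det_fin_two]
    exact abs_le'.mpr
      ⟨by nlinarith [sq_nonneg (B 0 0 - B 1 1), sq_nonneg (B 0 1 + B 1 0)],
        by nlinarith [sq_nonneg (B 0 0 + B 1 1), sq_nonneg (B 0 1 - B 1 0)]⟩
  linarith

theorem abs_det_le_lambdaMax_transpose_mul_self (B : Matrix (Fin 2) (Fin 2) ℝ) :
    |B.det| ≤ lambdaMax (Bᵀ * B) := by
  have htrace := two_mul_abs_det_le_trace_transpose_mul_self B
  have hdet : (Bᵀ * B).det = |B.det| ^ 2 := by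
    rw [det_mul, det_transpose, sq_abs, sq]
  have hdisc : 4 * (Bᵀ * B).det ≤ (Bᵀ * B).trace ^ 2 := by
    rw [hdet]
    nlinarith [abs_nonneg B.det]
  linarith [half_trace_le_lambdaMax_fin_two _ hdisc]

theorem transpose_inv_mul_transpose_mul_mul_inv {n : Type*} [Fintype n] [DecidableEq n]
    {R : Type*} [CommRing R] (C D : Matrix n n R) :
    (Cᵀ)⁻¹ * Dᵀ * (Cᵀ * C) * D * C⁻¹ = (C * D * C⁻¹)ᵀ * (C * D * C⁻¹) := by
  simp only [transpose_mul, transpose_nonsing_inv, Matrix.mul_assoc]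

end Matrix

theorem case_I_optimal_general (D : Matrix (Fin 2) (Fin 2) ℝ) (α β : ℝ)
    (hdet : D.det = α ^ 2 + β ^ 2) :
    ∀ C : Matrix (Fin 2) (Fin 2) ℝ, IsUnit C.det →
      α ^ 2 + β ^ 2 ≤ lambdaMax ((Cᵀ)⁻¹ * Dᵀ * (Cᵀ * C) * D * C⁻¹) := by
  intro C hC
  have hconj : (C * D * C⁻¹).det = α ^ 2 + β ^ 2 := by
    rw [det_conj ((isUnit_iff_isUnit_det C).mpr hC), hdet]
  rw [transpose_inv_mul_transpose_mul_mul_inv,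
    ← abs_of_nonneg (by positivity : 0 ≤ α ^ 2 + β ^ 2), ← hconj]
  exact abs_det_le_lambdaMax_transpose_mul_self _

/-- optimality of Case I. If `D` has complex-conjugate
eigenvalues `α ± iβ` (`β ≠ 0`), i.e. `tr D = 2α` and `det D = α² + β²`, then
every weighted norm `M̃ = C̃ᵀC̃` gives a squared stretching factor at least
`α² + β²`. -/
theorem case_I_optimal (D : Matrix (Fin 2) (Fin 2) ℝ) (α β : ℝ) (hβ : β ≠ 0)
    (htr : D.trace = 2 * α) (hdet : D.det = α ^ 2 + β ^ 2) :
    ∀ C : Matrix (Fin 2) (Fin 2) ℝ, IsUnit C.det →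
      α ^ 2 + β ^ 2 ≤ lambdaMax ((Cᵀ)⁻¹ * Dᵀ * (Cᵀ * C) * D * C⁻¹) :=
  case_I_optimal_general D α β hdet
end

section
/- Let M be a symmetric positive-definite real n×n matrix with decomposition M = CᵀC, C invertible, let x₀ ∈ ℝⁿ and δ > 0. Then the M-norm ball B_M(x₀, δ) = {x ∈ ℝⁿ : ‖x − x₀‖_M ≤ δ} is contained in the set C⁻¹·(C·x₀ + [−δ, δ]ⁿ) = {x₀ + C⁻¹·u : u ∈ ℝⁿ, ‖u‖_∞ ≤ δ}, where ‖u‖_∞ = max_i |uᵢ|. (This is the representable box over-approximation of the ellipsoidal ball computed in Step 4 of the LRT algorithm.) -/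
open Matrix

/-- Step 4 of the LRT algorithm. The ellipsoidal `M`-ball is
contained in the representable box over-approximation
`C⁻¹·(C·x₀ + [−δ, δ]ⁿ)`. -/
theorem ball_subset_box {n : ℕ} (M C : Matrix (Fin n) (Fin n) ℝ)
    (hM : M.PosDef) (hC : IsUnit C.det) (hCM : Cᵀ * C = M)
    (x₀ : Fin n → ℝ) (δ : ℝ) (hδ : 0 < δ) :
    Mball M x₀ δ ⊆
      {x | ∃ u : Fin n → ℝ, (∀ i, |u i| ≤ δ) ∧ x = x₀ + C⁻¹ *ᵥ u} := by
  intro y hy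
  set v := y - x₀ with hv
  set u := C *ᵥ v with hu
  have hMv : v ⬝ᵥ (M *ᵥ v) = u ⬝ᵥ u := by
    rw [← hCM, ← Matrix.mulVec_mulVec, Matrix.dotProduct_mulVec,
      Matrix.vecMul_transpose]
  have hsum : Real.sqrt (∑ i, u i * u i) ≤ δ := by
    have := hy
    simp only [Mball, Set.mem_setOf_eq, Mnorm, ← hv] at this
    rw [hMv] at this
    simpa [dotProduct] using this
  refine ⟨u, fun i => ?_, ?_⟩
  · have h1 : u i * u i ≤ ∑ j, u j * u j :=
      Finset.single_le_sum (f := fun j => u j * u j)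
        (fun j _ => mul_self_nonneg _) (Finset.mem_univ i)
    calc |u i| = Real.sqrt (u i * u i) := (Real.sqrt_mul_self_eq_abs _).symm
      _ ≤ Real.sqrt (∑ j, u j * u j) := Real.sqrt_le_sqrt h1
      _ ≤ δ := hsum
  · have : C⁻¹ *ᵥ u = v := by
      rw [hu, Matrix.mulVec_mulVec, Matrix.nonsing_inv_mul _ hC, Matrix.one_mulVec]
    rw [this, hv]
    abel
end
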